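/- For every π ∈ S_n, the minimum of inv over the coset π·Z_n satisfies min_{0 ≤ i < n} inv(π·c_n^i) ≤ (2n² − 3n + 1)/6. -/

import Mathlib

/-!
Average over the coset. Write `σ = π⁻¹`. Passing from `π` to `π * c_n ^ i` shifts every position
`σ b` by `-i` modulo `n`, so a pair of values `a < b` is inverted in exactly `(σ b - σ a) mod n` of
the `n` permutations of the coset. For fixed `a` these residues are distinct as `b` runs over
`b > a`, hence their sum is at most that of the `n - 1 - a` largest elements of `{0, …, n - 1}`,
which is `∑_{b > a} b`. Summing over `a` bounds the total number of inversions in the coset by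
`∑_b b ^ 2 = n (n - 1) (2n - 1) / 6`, and some member of the coset has at most the average.
-/

open Finset

def inversions {n : ℕ} (π : Equiv.Perm (Fin n)) : ℕ :=
  (Finset.univ.filter (fun p : Fin n × Fin n => p.1 < p.2 ∧ π p.2 < π p.1)).card

def winv {n : ℕ} (π : Equiv.Perm (Fin n)) : ℤ :=
  ∑ p ∈ Finset.univ.filter (fun p : Fin n × Fin n => p.1 < p.2 ∧ π p.2 < π p.1),
    ((π p.1 : ℤ) - (π p.2 : ℤ))

def cwinv {n : ℕ} (π : Equiv.Perm (Fin n)) : ℤ :=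
  n * inversions π - 2 * winv π

open Fin.NatCast Equiv

namespace Finset

variable {α M : Type*} [AddCommMonoid M] [PartialOrder M] [IsOrderedAddMonoid M]

theorem sum_le_sum_of_card_eq [DecidableEq α] {s t : Finset α} {f : α → M} (c : M)
    (hst : #s = #t) (hs : ∀ x ∈ s \ t, f x ≤ c) (ht : ∀ y ∈ t \ s, c ≤ f y) :
    ∑ x ∈ s, f x ≤ ∑ x ∈ t, f x :=
  calc ∑ x ∈ s, f x = ∑ x ∈ s ∩ t, f x + ∑ x ∈ s \ t, f x := (sum_inter_add_sum_sdiff s t f).symm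
    _ ≤ ∑ x ∈ s ∩ t, f x + #(s \ t) • c := by grw [sum_le_card_nsmul _ _ _ hs]
    _ = ∑ x ∈ t ∩ s, f x + #(t \ s) • c := by rw [inter_comm, card_sdiff_comm hst]
    _ ≤ ∑ x ∈ t ∩ s, f x + ∑ x ∈ t \ s, f x := by grw [card_nsmul_le_sum _ _ _ ht]
    _ = ∑ x ∈ t, f x := sum_inter_add_sum_sdiff t s f

variable [LinearOrder α] [LocallyFiniteOrderTop α] {f : α → M}

theorem sum_le_sum_Ioi_of_card_eq (hf : Monotone f) {s : Finset α} {a : α} (h : #s = #(Ioi a)) :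
    ∑ x ∈ s, f x ≤ ∑ x ∈ Ioi a, f x := by
  refine sum_le_sum_of_card_eq (f a) h (fun x hx => hf ?_) (fun y hy => hf ?_)
  · exact not_lt.1 (mem_Ioi.not.1 (mem_sdiff.1 hx).2)
  · exact (mem_Ioi.1 (mem_sdiff.1 hy).1).le

theorem sum_comp_Ioi_le (hf : Monotone f) {g : α → α} (hg : Function.Injective g) (a : α) :
    ∑ x ∈ Ioi a, f (g x) ≤ ∑ x ∈ Ioi a, f x := by
  classical
  rw [← sum_image hg.injOn]
  exact sum_le_sum_Ioi_of_card_eq hf (card_image_of_injective _ hg)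

theorem six_mul_sum_range_sq (n : ℕ) :
    6 * ∑ k ∈ range n, (k : ℤ) ^ 2 = n * (n - 1) * (2 * n - 1) := by
  induction n with
  | zero => simp
  | succ n ih => rw [sum_range_succ, mul_add, ih]; push_cast; ring

end Finset

namespace Fin

theorem sum_sum_Ioi_val (n : ℕ) : ∑ a : Fin n, ∑ b ∈ Ioi a, (b : ℕ) = ∑ k ∈ range n, k ^ 2 := by
  rw [sum_comm' (t' := univ) (s' := Iio) (by simp)]
  simp only [Finset.sum_const, card_Iio, smul_eq_mul, ← sq]
  exact sum_univ_eq_sum_range (· ^ 2) n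

theorem card_filter_sub_lt_sub {n : ℕ} [NeZero n] (x y : Fin n) :
    #{i | x - i < y - i} = (x - y : Fin n) := by
  have h (i : Fin n) : x - i < y - i ↔ x - i < x - y := by
    rw [← lt_sub_iff (a := x - i) (b := x - y), sub_sub_sub_cancel_left]
  simp_rw [h]
  rw [← card_Iio (x - y)]
  apply card_nbij' (x - ·) (x - ·) <;> intro i _ <;> simp_all

end Fin

theorem finRotate_pow_apply {n : ℕ} [NeZero n] (k : ℕ) (z : Fin n) :
    (finRotate n ^ k) z = z + k := by
  induction k with
  | zero => simp
  | succ k ih => rw [pow_succ', Perm.mul_apply, ih, finRotate_apply, Nat.cast_succ, add_assoc]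

theorem finRotate_pow_inv_apply {n : ℕ} [NeZero n] (k : ℕ) (z : Fin n) :
    (finRotate n ^ k)⁻¹ z = z - k := by
  rw [Perm.inv_eq_iff_eq, finRotate_pow_apply, sub_add_cancel]

theorem inversions_eq_card_inv {n : ℕ} (ρ : Perm (Fin n)) :
    inversions ρ = #{p : Fin n × Fin n | p.1 < p.2 ∧ ρ⁻¹ p.2 < ρ⁻¹ p.1} := by
  refine card_nbij' (fun p => (ρ p.2, ρ p.1)) (fun p => (ρ⁻¹ p.2, ρ⁻¹ p.1)) ?_ ?_ ?_ ?_ <;>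
    intro p hp <;> simp_all

theorem sum_inversions_mul_finRotate_pow {n : ℕ} [NeZero n] (π : Perm (Fin n)) :
    ∑ i : Fin n, inversions (π * finRotate n ^ (i : ℕ)) =
      ∑ a, ∑ b ∈ Ioi a, ((π⁻¹ b - π⁻¹ a : Fin n) : ℕ) := by
  simp_rw [inversions_eq_card_inv, mul_inv_rev, Perm.mul_apply, finRotate_pow_inv_apply,
    Fin.cast_val_eq_self]
  calc _ = ∑ p : Fin n × Fin n, #{i : Fin n | p.1 < p.2 ∧ π⁻¹ p.2 - i < π⁻¹ p.1 - i} :=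
        sum_card_bipartiteAbove_eq_sum_card_bipartiteBelow _
    _ = ∑ p : Fin n × Fin n, if p.1 < p.2 then ((π⁻¹ p.2 - π⁻¹ p.1 : Fin n) : ℕ) else 0 := by
        refine sum_congr rfl fun p _ => ?_
        split_ifs with h
        · simp only [h, true_and, Fin.card_filter_sub_lt_sub]
        · simp [h]
    _ = _ := by simp_rw [Fintype.sum_prod_type, ← sum_filter, filter_lt_eq_Ioi]

theorem min_inv_coset_le {n : ℕ} (hn : 0 < n) (π : Equiv.Perm (Fin n)) :
    ∃ i < n, 6 * (inversions (π * (finRotate n) ^ i) : ℤ)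
      ≤ 2 * n ^ 2 - 3 * n + 1 := by
  have : NeZero n := NeZero.of_pos hn
  have htotal : ∑ i : Fin n, inversions (π * finRotate n ^ (i : ℕ)) ≤ ∑ k ∈ range n, k ^ 2 := by
    rw [sum_inversions_mul_finRotate_pow, ← Fin.sum_sum_Ioi_val]
    exact sum_le_sum fun a _ =>
      sum_comp_Ioi_le Fin.val_strictMono.monotone (sub_left_injective.comp π⁻¹.injective) a
  have hsum : ∑ i : Fin n, 6 * (inversions (π * finRotate n ^ (i : ℕ)) : ℤ) ≤
      ∑ _i : Fin n, (2 * n ^ 2 - 3 * n + 1 : ℤ) := by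
    rw [← mul_sum, sum_const, card_univ, Fintype.card_fin, nsmul_eq_mul]
    have hsq := six_mul_sum_range_sq n
    zify at htotal
    linarith
  obtain ⟨i, -, hi⟩ := exists_le_of_sum_le univ_nonempty hsum
  exact ⟨i, i.isLt, hi⟩
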